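/- Let A be a real n×m matrix, D ∈ ℝ^{d×n}, λ ≥ 0, L = DᵀD, and for a vector q ∈ ℝ^m define the symmetric n×n matrix S(q) = λL − A q qᵀ Aᵀ. Fix Q ∈ ℝ^{m×k} with QᵀQ = I_k and columns q₁,…,q_k. Then the minimum of F(P,Q,B) = ‖A − PBQᵀ‖² + λ‖DP‖² over all P ∈ ℝ^{n×k} with unit-norm columns and all diagonal B equals ‖A‖² + Σ_{i=1}^k λ_min(S(q_i)), where λ_min denotes the smallest eigenvalue; the minimum is attained by taking each column p_i of P to be a unit eigenvector of S(q_i) for its smallest eigenvalue and β_i = p_iᵀ A q_i. -/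
import Mathlib


open Matrix BigOperators

/-- Squared Frobenius norm of a real matrix. -/
noncomputable def frobSq {n m : ℕ} (X : Matrix (Fin n) (Fin m) ℝ) : ℝ :=
  ∑ i, ∑ j, (X i j) ^ 2

lemma frobSq_eq_trace {n m : ℕ} (X : Matrix (Fin n) (Fin m) ℝ) :
    frobSq X = (Xᵀ * X).trace := by
  simp only [frobSq, Matrix.trace, Matrix.diag, Matrix.mul_apply, Matrix.transpose_apply, sq]
  rw [Finset.sum_comm]

lemma quadform_aux {n : ℕ} (M : Matrix (Fin n) (Fin n) ℝ) (u p : Fin n → ℝ) (lam : ℝ) :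
    p ⬝ᵥ ((lam • M - vecMulVec u u) *ᵥ p)
      = lam * (p ⬝ᵥ (M *ᵥ p)) - (p ⬝ᵥ u) ^ 2 := by
  have h : vecMulVec u u *ᵥ p = (u ⬝ᵥ p) • u := by
    funext i
    simp only [vecMulVec, mulVec, dotProduct, of_apply, Pi.smul_apply, smul_eq_mul, mul_assoc]
    rw [← Finset.mul_sum, mul_comm]
  rw [sub_mulVec, dotProduct_sub, h]
  simp only [dotProduct_smul, smul_mulVec, smul_eq_mul, dotProduct_comm p u, sq]

lemma cross_trace {n m k : ℕ} (A : Matrix (Fin n) (Fin m) ℝ) (Q : Matrix (Fin m) (Fin k) ℝ)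
    (P : Matrix (Fin n) (Fin k) ℝ) (β : Fin k → ℝ) :
    (Aᵀ * (P * Matrix.diagonal β * Qᵀ)).trace
      = ∑ i, β i * ((fun a => P a i) ⬝ᵥ (A *ᵥ fun b => Q b i)) := by
  rw [show Aᵀ * (P * Matrix.diagonal β * Qᵀ) = (Aᵀ * P * Matrix.diagonal β) * Qᵀ by
    simp only [Matrix.mul_assoc], Matrix.trace_mul_comm]
  rw [show Qᵀ * (Aᵀ * P * Matrix.diagonal β) = (Qᵀ * (Aᵀ * P)) * Matrix.diagonal β by
    simp only [Matrix.mul_assoc]]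
  simp only [Matrix.trace, Matrix.diag, Matrix.mul_diagonal]
  simp only [Matrix.mul_apply, Matrix.transpose_apply, dotProduct, mulVec,
    Finset.sum_mul, Finset.mul_sum]
  refine Finset.sum_congr rfl fun i _ => ?_
  rw [Finset.sum_comm]
  refine Finset.sum_congr rfl fun a _ => Finset.sum_congr rfl fun b _ => by ring

lemma sq_trace {n m k : ℕ} (Q : Matrix (Fin m) (Fin k) ℝ) (hQ : Qᵀ * Q = 1)
    (P : Matrix (Fin n) (Fin k) ℝ) (β : Fin k → ℝ) (hP : ∀ i, ∑ a, P a i ^ 2 = 1) :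
    ((P * Matrix.diagonal β * Qᵀ)ᵀ * (P * Matrix.diagonal β * Qᵀ)).trace
      = ∑ i, (β i) ^ 2 := by
  rw [Matrix.trace_mul_comm]
  rw [show (P * Matrix.diagonal β * Qᵀ) * (P * Matrix.diagonal β * Qᵀ)ᵀ
      = (P * Matrix.diagonal β) * (Matrix.diagonal β * Pᵀ) by
    simp only [Matrix.transpose_mul, Matrix.diagonal_transpose, Matrix.transpose_transpose,
      Matrix.mul_assoc]
    rw [show Qᵀ * (Q * (Matrix.diagonal β * Pᵀ)) = Matrix.diagonal β * Pᵀ by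
      rw [← Matrix.mul_assoc, hQ, Matrix.one_mul]]]
  rw [Matrix.trace_mul_comm]
  rw [show (Matrix.diagonal β * Pᵀ) * (P * Matrix.diagonal β)
      = (Matrix.diagonal β * (Pᵀ * P)) * Matrix.diagonal β by simp only [Matrix.mul_assoc]]
  simp only [Matrix.trace, Matrix.diag, Matrix.mul_diagonal, Matrix.diagonal_mul]
  refine Finset.sum_congr rfl fun i _ => ?_
  have : (Pᵀ * P) i i = 1 := by
    rw [← hP i]; simp [Matrix.mul_apply, sq]
  rw [this]; ring

lemma reg_trace {n d k : ℕ} (D : Matrix (Fin d) (Fin n) ℝ) (P : Matrix (Fin n) (Fin k) ℝ) :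
    frobSq (D * P) = ∑ i, (fun a => P a i) ⬝ᵥ ((Dᵀ * D) *ᵥ fun a => P a i) := by
  rw [frobSq_eq_trace, Matrix.transpose_mul, show Pᵀ * Dᵀ * (D * P) = Pᵀ * ((Dᵀ * D) * P) by
    simp only [Matrix.mul_assoc]]
  simp only [Matrix.trace, Matrix.diag, Matrix.mul_apply, Matrix.transpose_apply,
    dotProduct, mulVec, Finset.sum_mul, Finset.mul_sum]

lemma key_identity {n m d k : ℕ} (A : Matrix (Fin n) (Fin m) ℝ) (D : Matrix (Fin d) (Fin n) ℝ)
    (lam : ℝ) (Q : Matrix (Fin m) (Fin k) ℝ) (hQ : Qᵀ * Q = 1)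
    (P : Matrix (Fin n) (Fin k) ℝ) (β : Fin k → ℝ) (hP : ∀ i, ∑ a, P a i ^ 2 = 1) :
    frobSq (A - P * Matrix.diagonal β * Qᵀ) + lam * frobSq (D * P)
      = frobSq A + ∑ i,
          ((β i - (fun a => P a i) ⬝ᵥ (A *ᵥ fun b => Q b i)) ^ 2
            + (fun a => P a i) ⬝ᵥ
              ((lam • (Dᵀ * D) - vecMulVec (A *ᵥ fun b => Q b i) (A *ᵥ fun b => Q b i))
                *ᵥ fun a => P a i)) := by
  set M := P * Matrix.diagonal β * Qᵀ with hM
  set c : Fin k → ℝ := fun i => (fun a => P a i) ⬝ᵥ (A *ᵥ fun b => Q b i) with hc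
  set g : Fin k → ℝ := fun i => (fun a => P a i) ⬝ᵥ ((Dᵀ * D) *ᵥ fun a => P a i) with hg
  have e1 : frobSq (A - M) = frobSq A - 2 * ∑ i, β i * c i + ∑ i, β i ^ 2 := by
    rw [frobSq_eq_trace, Matrix.transpose_sub, Matrix.sub_mul, Matrix.mul_sub, Matrix.mul_sub,
      Matrix.trace_sub, Matrix.trace_sub, Matrix.trace_sub]
    have hMA : (Mᵀ * A).trace = (Aᵀ * M).trace := by
      rw [← Matrix.trace_transpose (Mᵀ * A), Matrix.transpose_mul, Matrix.transpose_transpose]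
    rw [hMA, hM, cross_trace A Q P β, sq_trace Q hQ P β hP, frobSq_eq_trace A]
    ring
  rw [e1, reg_trace D P]
  simp only [quadform_aux]
  have e2 : ∑ i, ((β i - c i) ^ 2 + (lam * g i - c i ^ 2))
      = ∑ i, (β i ^ 2 - 2 * (β i * c i) + lam * g i) :=
    Finset.sum_congr rfl fun i _ => by ring
  rw [e2, Finset.sum_add_distrib, Finset.sum_sub_distrib, ← Finset.mul_sum, ← Finset.mul_sum]
  ring


/-- For fixed `Q` with `QᵀQ = Iₖ` and columns `q₁,…,qₖ`, the minimum of
`F(P,Q,B) = ‖A - PBQᵀ‖² + λ‖DP‖²` over `P` with unit-norm columns and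
diagonal `B` equals `‖A‖² + ∑ᵢ λ_min(S(qᵢ))` where `S(q) = λL - Aqqᵀ Aᵀ`;
it is attained when each column `pᵢ` is a unit eigenvector of `S(qᵢ)` for its
smallest eigenvalue and `βᵢ = pᵢᵀ A qᵢ`. -/
theorem regularised_svd_fixed_Q {n m d k : ℕ}
    (A : Matrix (Fin n) (Fin m) ℝ) (D : Matrix (Fin d) (Fin n) ℝ)
    (lam : ℝ) (hlam : 0 ≤ lam)
    (L : Matrix (Fin n) (Fin n) ℝ) (hL : L = Dᵀ * D)
    (S : (Fin m → ℝ) → Matrix (Fin n) (Fin n) ℝ)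
    (hS : ∀ q, S q = lam • L - vecMulVec (A *ᵥ q) (A *ᵥ q))
    (Q : Matrix (Fin m) (Fin k) ℝ) (hQ : Qᵀ * Q = 1)
    (q : Fin k → (Fin m → ℝ)) (hq : ∀ i a, q i a = Q a i)
    -- `ν i` is the smallest eigenvalue of `S (q i)`, `w i` a corresponding unit eigenvector
    (ν : Fin k → ℝ) (w : Fin k → (Fin n → ℝ))
    (hw_unit : ∀ i, ∑ a, w i a ^ 2 = 1)
    (hw_eig : ∀ i, S (q i) *ᵥ w i = ν i • w i)
    (hν_min : ∀ i (p : Fin n → ℝ), (∑ a, p a ^ 2 = 1) → ν i ≤ p ⬝ᵥ (S (q i) *ᵥ p))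
    (P₀ : Matrix (Fin n) (Fin k) ℝ) (hP₀ : P₀ = Matrix.of fun a i => w i a)
    (β₀ : Fin k → ℝ) (hβ₀ : ∀ i, β₀ i = w i ⬝ᵥ (A *ᵥ q i)) :
    (∀ (P : Matrix (Fin n) (Fin k) ℝ) (β : Fin k → ℝ), (∀ i, ∑ a, P a i ^ 2 = 1) →
        frobSq A + ∑ i, ν i ≤
          frobSq (A - P * Matrix.diagonal β * Qᵀ) + lam * frobSq (D * P)) ∧
    (∀ i, ∑ a, P₀ a i ^ 2 = 1) ∧
    frobSq (A - P₀ * Matrix.diagonal β₀ * Qᵀ) + lam * frobSq (D * P₀) =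
      frobSq A + ∑ i, ν i := by
  have hq' : ∀ i, q i = fun b => Q b i := fun i => funext (hq i)
  have hSq : ∀ i, S (q i) = lam • (Dᵀ * D)
      - vecMulVec (A *ᵥ fun b => Q b i) (A *ᵥ fun b => Q b i) := by
    intro i; rw [hS, hL, hq']
  have hP₀col : ∀ i, (fun a => P₀ a i) = w i := by
    intro i; funext a; rw [hP₀]; rfl
  have hP₀unit : ∀ i, ∑ a, P₀ a i ^ 2 = 1 := by
    intro i
    have := hw_unit i
    simp only [hP₀, Matrix.of_apply]
    exact this
  refine ⟨?_, hP₀unit, ?_⟩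
  · intro P β hP
    rw [key_identity A D lam Q hQ P β hP]
    have : ∑ i, ν i ≤ ∑ i,
        ((β i - (fun a => P a i) ⬝ᵥ (A *ᵥ fun b => Q b i)) ^ 2
          + (fun a => P a i) ⬝ᵥ
            ((lam • (Dᵀ * D) - vecMulVec (A *ᵥ fun b => Q b i) (A *ᵥ fun b => Q b i))
              *ᵥ fun a => P a i)) := by
      refine Finset.sum_le_sum fun i _ => ?_
      have h1 := hν_min i (fun a => P a i) (hP i)
      rw [hSq i] at h1
      nlinarith [sq_nonneg (β i - (fun a => P a i) ⬝ᵥ (A *ᵥ fun b => Q b i))]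
    linarith
  · rw [key_identity A D lam Q hQ P₀ β₀ hP₀unit]
    have : ∀ i,
        ((β₀ i - (fun a => P₀ a i) ⬝ᵥ (A *ᵥ fun b => Q b i)) ^ 2
          + (fun a => P₀ a i) ⬝ᵥ
            ((lam • (Dᵀ * D) - vecMulVec (A *ᵥ fun b => Q b i) (A *ᵥ fun b => Q b i))
              *ᵥ fun a => P₀ a i)) = ν i := by
      intro i
      rw [hP₀col i, ← hSq i, hw_eig i, hβ₀ i, hq' i]
      have hww : w i ⬝ᵥ w i = 1 := by
        rw [← hw_unit i]; simp [dotProduct, sq]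
      simp [dotProduct_smul, hww]
    rw [Finset.sum_congr rfl fun i _ => this i]
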